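/- arXiv:1603.02064 — 12 statements merged into one kernel-verified Lean document; each statement's English description precedes it below -/
import Mathlib

section
/- Let G be a group and μ a character of G into ℂ\{0}. If f : G → ℂ is a nonzero solution of f(xy) + μ(y) f(xy⁻¹) = 2 f(x) f(y) for all x, y ∈ G, then f(x) = μ(x) f(x⁻¹) for all x ∈ G. -/
theorem stmt_1 {G : Type*} [Group G] (μ f : G → ℂ)
    (hμ : ∀ x y, μ (x * y) = μ x * μ y) (hμ0 : ∀ x, μ x ≠ 0)
    (hf : ∀ x y, f (x * y) + μ y * f (x * y⁻¹) = 2 * f x * f y)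
    (hf0 : f ≠ 0) : ∀ x, f x = μ x * f x⁻¹ := by
  have hμ1 : μ 1 = 1 := by
    have h := hμ 1 1
    rw [one_mul] at h
    have := hμ0 1
    field_simp at h
    tauto
  obtain ⟨a, ha⟩ : ∃ a, f a ≠ 0 := by
    by_contra h
    push_neg at h
    exact hf0 (funext h)
  have hf1 : f 1 = 1 := by
    have h := hf a 1
    simp [hμ1] at h
    have : 2 * f a * 1 = 2 * f a * f 1 := by linear_combination h
    exact (mul_left_cancel₀ (by simpa using ha) this.symm)
  intro x
  have h := hf 1 x
  simp [hf1] at h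
  linear_combination -h
end

section
/- Let G be a group and μ a character of G into ℂ\{0}. If f, g : G → ℂ satisfy the μ-Wilson equation f(xy) + μ(y) f(xy⁻¹) = 2 f(x) g(y) for all x, y ∈ G, and f is not identically zero, then g(y) = μ(y) g(y⁻¹) for all y ∈ G. -/
theorem stmt_2 {G : Type*} [Group G] (μ f g : G → ℂ)
    (hμ : ∀ x y, μ (x * y) = μ x * μ y) (hμ0 : ∀ x, μ x ≠ 0)
    (hfg : ∀ x y, f (x * y) + μ y * f (x * y⁻¹) = 2 * f x * g y)
    (hf0 : f ≠ 0) : ∀ y, g y = μ y * g y⁻¹ := by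
  obtain ⟨x0, hx0⟩ := Function.ne_iff.mp hf0
  simp only [Pi.zero_apply] at hx0
  have hμ1 : μ 1 = 1 := by
    have h : μ 1 * μ 1 = μ 1 * 1 := by rw [mul_one, ← hμ, mul_one]
    exact mul_left_cancel₀ (hμ0 1) h
  have hinv : ∀ y, μ y * μ y⁻¹ = 1 := fun y => by
    rw [← hμ, mul_inv_cancel, hμ1]
  intro y
  have h1 := hfg x0 y
  have h2 := hfg x0 y⁻¹
  rw [inv_inv] at h2
  have h3 : μ y * (f (x0 * y⁻¹) + μ y⁻¹ * f (x0 * y)) = μ y * (2 * f x0 * g y⁻¹) := by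
    rw [h2]
  have key : 2 * f x0 * g y = 2 * f x0 * (μ y * g y⁻¹) := by
    linear_combination -h1 + h3 - f (x0 * y) * hinv y
  have h2f : (2 : ℂ) * f x0 ≠ 0 := by
    simp [hx0]
  exact mul_left_cancel₀ h2f key
end

section
/- Let G be an abelian group and μ a character of G into ℂ\{0}. If f : G → ℂ is a nonzero solution of the μ-d'Alembert equation f(xy) + μ(y) f(xy⁻¹) = 2 f(x) f(y) for all x, y ∈ G, then there exists a multiplicative function φ : G → ℂ (φ(xy) = φ(x)φ(y)) such that f(x) = (φ(x) + μ(x)φ(x⁻¹))/2 for all x ∈ G. -/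
theorem stmt_6 {G : Type*} [CommGroup G] (μ f : G → ℂ)
    (hμ : ∀ x y, μ (x * y) = μ x * μ y) (hμ0 : ∀ x, μ x ≠ 0)
    (hf : ∀ x y, f (x * y) + μ y * f (x * y⁻¹) = 2 * f x * f y)
    (hf0 : f ≠ 0) :
    ∃ φ : G → ℂ, (∀ x y, φ (x * y) = φ x * φ y) ∧
      ∀ x, f x = (φ x + μ x * φ x⁻¹) / 2 := by
  obtain ⟨x₀, hx₀⟩ : ∃ x, f x ≠ 0 := by
    by_contra h; push_neg at h; exact hf0 (funext h)
  have hμ1 : μ 1 = 1 := by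
    have h := hμ 1 1
    rw [one_mul] at h
    have h2 : μ 1 * μ 1 = μ 1 * 1 := by rw [mul_one, ← h]
    exact mul_left_cancel₀ (hμ0 1) h2
  have hμinv : ∀ y : G, μ y * μ y⁻¹ = 1 := by
    intro y
    rw [← hμ, mul_inv_cancel, hμ1]
  have hf1 : f 1 = 1 := by
    have h := hf x₀ 1
    rw [mul_one, inv_one, mul_one, hμ1, one_mul] at h
    have h2 : (2 * f x₀) * f 1 = (2 * f x₀) * 1 := by
      rw [mul_one]; linear_combination -h
    have hne : (2 : ℂ) * f x₀ ≠ 0 := by simp [hx₀]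
    exact mul_left_cancel₀ hne h2
  have hinv : ∀ y : G, μ y * f y⁻¹ = f y := by
    intro y
    have h := hf 1 y
    rw [one_mul, one_mul, hf1] at h
    linear_combination h
  have hsq : ∀ x : G, f (x * x) = 2 * f x ^ 2 - μ x := by
    intro x
    have h := hf x x
    rw [mul_inv_cancel, hf1, mul_one] at h
    linear_combination h
  -- key square identity: (f(xy) - f x f y)^2 = (f x^2 - μ x)(f y^2 - μ y)
  have hG2 : ∀ x y : G, (f (x * y) - f x * f y) ^ 2
      = (f x ^ 2 - μ x) * (f y ^ 2 - μ y) := by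
    intro x y
    have e3 := hf (x * y) (x * y⁻¹)
    rw [show x * y * (x * y⁻¹) = x * x by simp [mul_comm, mul_left_comm, mul_assoc],
        show x * y * (x * y⁻¹)⁻¹ = y * y by simp [mul_comm, mul_left_comm, mul_assoc],
        hμ x y⁻¹] at e3
    have e1 := hsq x
    have e2 := hsq y
    have e4 := hf x y
    have h5 := hμinv y
    linear_combination (-(μ y)/2) * e1 + (-(μ x)/2) * e2 + (μ y/2) * e3
      + (f (x*y)) * e4 + (-(μ x) * f (y*y)/2) * h5
  -- symmetrized identity
  have hstar : ∀ x y z : G, f (x * y * z)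
      = f (x * y) * f z + f (x * z) * f y + f x * f (y * z)
        - 2 * f x * f y * f z := by
    intro x y z
    have u1 := hf (x * y) z
    have u2 := hf (x * z) y
    rw [show x * z * y = x * y * z by simp [mul_comm, mul_left_comm, mul_assoc],
        show x * z * y⁻¹ = x * y⁻¹ * z by simp [mul_comm, mul_left_comm, mul_assoc]] at u2
    have v1 := hf y z
    have v3 := hf x (y * z⁻¹)
    rw [show x * (y * z⁻¹) = x * y * z⁻¹ by rw [mul_assoc],
        show x * (y * z⁻¹)⁻¹ = x * y⁻¹ * z by
          simp [mul_comm, mul_left_comm, mul_assoc, mul_inv_rev],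
        hμ y z⁻¹] at v3
    have h5 := hμinv z
    linear_combination (u1 + u2 - μ z * v3 - 2 * f x * v1
      + μ y * f (x * y⁻¹ * z) * h5) / 2
  by_cases hmul : ∀ x y : G, f (x * y) = f x * f y
  · exact ⟨f, hmul, fun x => by linear_combination - (hinv x) / 2⟩
  · push_neg at hmul
    obtain ⟨a, b', hbb'⟩ := hmul
    have hwa : f a ^ 2 - μ a ≠ 0 := by
      intro h
      apply hbb'
      have h2 := hG2 a b'
      rw [h, zero_mul, pow_eq_zero_iff (two_ne_zero)] at h2
      exact sub_eq_zero.mp h2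
    obtain ⟨c, hc⟩ : ∃ c : ℂ, c ^ 2 = f a ^ 2 - μ a :=
      IsAlgClosed.exists_pow_nat_eq _ zero_lt_two
    have hc0 : c ≠ 0 := by
      intro h; rw [h] at hc; simp at hc; exact hwa hc.symm
    obtain ⟨s, hsdef⟩ : ∃ s : G → ℂ, ∀ x, c * s x = f (x * a) - f x * f a :=
      ⟨fun x => (f (x * a) - f x * f a) / c, fun x => by field_simp⟩
    -- s a = c
    have hsa : s a = c := by
      have h := hsdef a
      rw [hsq a] at h
      have h2 : c * s a = c * c := by linear_combination h - hc
      exact mul_left_cancel₀ hc0 h2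
    -- sine addition law
    have sadd : ∀ x y : G, s (x * y) = s x * f y + f x * s y := by
      intro x y
      have h2 : c * s (x * y) = c * (s x * f y + f x * s y) := by
        linear_combination hsdef (x * y) + hstar x y a - f y * hsdef x - f x * hsdef y
      exact mul_left_cancel₀ hc0 h2
    -- multiplicative defect is s x * s y
    have hg : ∀ x y : G, f (x * y) - f x * f y = s x * s y := by
      intro x y
      have h1 := sadd x (y * a)
      rw [← mul_assoc] at h1
      have h2 := sadd (x * y) a
      have h3 := sadd y a
      have h4 := sadd x y
      have key : s x * (f (y * a) - f y * f a) = (f (x * y) - f x * f y) * s a := by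
        linear_combination h2 - h1 - f x * h3 + f a * h4
      have key2 : c * (f (x * y) - f x * f y) = c * (s x * s y) := by
        linear_combination -key - s x * hsdef y - (f (x * y) - f x * f y) * hsa
      exact mul_left_cancel₀ hc0 key2
    refine ⟨fun x => f x + s x, fun x y => ?_, fun x => ?_⟩
    · show f (x * y) + s (x * y) = (f x + s x) * (f y + s y)
      linear_combination hg x y + sadd x y
    · show f x = ((f x + s x) + μ x * (f x⁻¹ + s x⁻¹)) / 2
      have hcomm1 : f (x⁻¹ * a) = f (a * x⁻¹) := by rw [mul_comm]
      have hcomm2 : f (x * a) = f (a * x) := by rw [mul_comm]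
      have hsinv : μ x * s x⁻¹ = - s x := by
        have h2 : c * (μ x * s x⁻¹) = c * (- s x) := by
          linear_combination μ x * hsdef x⁻¹ + μ x * hcomm1 + hf a x
            - f a * hinv x + hsdef x + hcomm2
        exact mul_left_cancel₀ hc0 h2
      linear_combination (-(hinv x) - hsinv) / 2
end

section
/- Let G be a group and μ a character of G into ℂ\{0}. Suppose f, g : G → ℂ satisfy the μ-Wilson equation f(xy) + μ(y) f(xy⁻¹) = 2 f(x) g(y) for all x, y ∈ G, with f not identically zero. Then g satisfies the μ-d'Alembert equation g(xy) + μ(y) g(xy⁻¹) = 2 g(x) g(y) for all x, y ∈ G. -/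
theorem stmt_7 {G : Type*} [Group G] (μ f g : G → ℂ)
    (hμ : ∀ x y, μ (x * y) = μ x * μ y) (hμ0 : ∀ x, μ x ≠ 0)
    (hfg : ∀ x y, f (x * y) + μ y * f (x * y⁻¹) = 2 * f x * g y)
    (hf0 : f ≠ 0) :
    ∀ x y, g (x * y) + μ y * g (x * y⁻¹) = 2 * g x * g y := by
  obtain ⟨a₀, ha₀⟩ := Function.ne_iff.mp hf0
  simp only [Pi.zero_apply] at ha₀
  have hμ1 : μ 1 = 1 := by
    have h := hμ 1 1
    rw [mul_one] at h
    have h2 : μ 1 * μ 1 = μ 1 * 1 := by rw [mul_one, ← h]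
    exact mul_left_cancel₀ (hμ0 1) h2
  have hinv : ∀ y : G, μ y * μ y⁻¹ = 1 := by
    intro y
    rw [← hμ, mul_inv_cancel]
    exact hμ1
  have hcan : ∀ u v : ℂ, 2 * f a₀ * u = 2 * f a₀ * v → u = v := by
    intro u v h
    exact mul_left_cancel₀ (mul_ne_zero two_ne_zero ha₀) h
  have hg1 : g 1 = 1 := by
    have h := hfg a₀ 1
    simp only [mul_one, inv_one, hμ1, one_mul] at h
    refine (hcan (g 1) 1 ?_).symm.symm
    linear_combination -h
  have hpar : ∀ y : G, μ y * g y⁻¹ = g y := by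
    intro y
    have h1 := hfg a₀ y
    have h2 := hfg a₀ y⁻¹
    rw [inv_inv] at h2
    refine hcan _ _ ?_
    linear_combination h1 - μ y * h2 + f (a₀ * y) * hinv y
  -- (I)
  have hI : ∀ a c y : G, f (a * y * c) + μ y * f (a * y⁻¹ * c) =
      2 * f a * (g (y * c) + μ y * g (y⁻¹ * c)) - 2 * μ c * f (a * c⁻¹) * g y := by
    intro a c y
    have h1 := hfg a (y * c)
    have h2 := hfg a (y⁻¹ * c)
    have h3 := hfg (a * c⁻¹) y
    simp only [mul_inv_rev, inv_inv, hμ, ← mul_assoc] at h1 h2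
    linear_combination h1 + μ y * h2 - μ c * h3 - μ c * f (a * c⁻¹ * y) * hinv y
  -- (III)
  have hIII : ∀ c y : G, (g (y * c) + μ y * g (y⁻¹ * c)) +
      μ c * (g (y * c⁻¹) + μ y * g (y⁻¹ * c⁻¹)) = 4 * g c * g y := by
    intro c y
    have h1 := hI a₀ c y
    have h2 := hI a₀ c⁻¹ y
    simp only [inv_inv] at h2
    have h3 := hfg (a₀ * y) c
    have h4 := hfg (a₀ * y⁻¹) c
    have h5 := hfg a₀ y
    have h6 := hfg a₀ c
    refine hcan _ _ ?_
    linear_combination h3 + μ y * h4 + 2 * g c * h5 - h1 - μ c * h2 + 2 * g y * h6 +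
      2 * g y * f (a₀ * c) * hinv c
  -- (★)
  have hstar : ∀ y c : G, g (y * c) + μ y * g (y⁻¹ * c) + g (c * y) + μ y * g (c * y⁻¹) =
      4 * g c * g y := by
    intro y c
    have p1 := hpar (c * y)
    have p2 := hpar (c * y⁻¹)
    simp only [mul_inv_rev, inv_inv, hμ, ← mul_assoc] at p1 p2
    linear_combination hIII c y - p1 - μ y * p2 + μ c * g (y * c⁻¹) * hinv y
  -- (W')
  have hW : ∀ a c y : G, f (a * y * c) + μ y * f (a * y⁻¹ * c) =
      2 * f (a * c) * g y - 2 * f a * (g (c * y) + μ y * g (c * y⁻¹) - 2 * g c * g y) := by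
    intro a c y
    linear_combination hI a c y + 2 * f a * hstar y c - 2 * g y * hfg a c
  intro x y
  by_contra hne
  have hne' : g (x * y) + μ y * g (x * y⁻¹) - 2 * g x * g y ≠ 0 := sub_ne_zero.mpr hne
  -- the key translation identity
  have hkey : ∀ a : G, 2 * f (a * x) * (g (x * y) + μ y * g (x * y⁻¹) - 2 * g x * g y) =
      f a * ((g (x * x * y) + μ x * μ y * g (x * y⁻¹ * x⁻¹) - 2 * g x * g (x * y)) +
        μ y * (g (x * x * y⁻¹) + μ x * μ y⁻¹ * g (x * y * x⁻¹) - 2 * g x * g (x * y⁻¹))) := by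
    intro a
    have hZ1 := hW (a * x) x y
    have hA := hW a x (x * y)
    have hB := hW a x (x * y⁻¹)
    have hw1 := hfg a y
    have hw2 := hfg (a * x) x
    simp only [mul_inv_rev, inv_inv, hμ, ← mul_assoc, inv_mul_cancel_right,
      mul_inv_cancel_right] at hA hB hw2
    linear_combination (hZ1 - hA - μ y * hB + μ x * hw1 + 2 * g y * hw2 +
      μ x * f (a * y) * hinv y) / 2
  have hw0 := hW a₀ x y
  have hp := hfg a₀ y
  have hfin : 4 * f a₀ * ((g (x * y) + μ y * g (x * y⁻¹) - 2 * g x * g y) *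
      (g (x * y) + μ y * g (x * y⁻¹) - 2 * g x * g y)) = 0 := by
    linear_combination 2 * (g (x * y) + μ y * g (x * y⁻¹) - 2 * g x * g y) * hw0 -
      hkey (a₀ * y) - μ y * hkey (a₀ * y⁻¹) + 2 * g y * hkey a₀ -
      ((g (x * x * y) + μ x * μ y * g (x * y⁻¹ * x⁻¹) - 2 * g x * g (x * y)) +
        μ y * (g (x * x * y⁻¹) + μ x * μ y⁻¹ * g (x * y * x⁻¹) - 2 * g x * g (x * y⁻¹))) * hp
  have h2 : (g (x * y) + μ y * g (x * y⁻¹) - 2 * g x * g y) *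
      (g (x * y) + μ y * g (x * y⁻¹) - 2 * g x * g y) = 0 :=
    (mul_eq_zero.mp hfin).resolve_left (mul_ne_zero (by norm_num) ha₀)
  exact hne' (mul_self_eq_zero.mp h2)
end

section
/- Let G be a group, μ a character of G into ℂ\{0}, and f a nonzero solution of f(xy) + μ(y) f(xy⁻¹) = 2 f(x) f(y) for all x, y ∈ G. Then f is central, i.e. f(xy) = f(yx) for all x, y ∈ G. -/
/-!
Putting `x = 1` shows `f 1 = 1` and then `μ y f(y⁻¹) = f y`. Applied to `y x⁻¹` this gives
`μ x f(y x⁻¹) = μ y f(x y⁻¹)`, so the difference of the equation at `(x, y)` and at `(y, x)`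
reduces to `f(xy) = f(yx)`, the right-hand side `2 f(x) f(y)` being symmetric.
-/

section DAlembert

variable {G K : Type*} [Group G] [Field K] {μ f : G → K}

theorem map_one_eq_one_of_map_mul (hμ : ∀ x y, μ (x * y) = μ x * μ y) (hμ1 : μ 1 ≠ 0) :
    μ 1 = 1 := by
  have h := hμ 1 1
  rw [one_mul, eq_comm, mul_eq_left₀ hμ1] at h
  exact h

theorem dAlembert_map_one [NeZero (2 : K)] (hμ1 : μ 1 = 1)
    (hf : ∀ x y, f (x * y) + μ y * f (x * y⁻¹) = 2 * f x * f y) (hf0 : f ≠ 0) : f 1 = 1 := by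
  obtain ⟨x, hx⟩ := Function.ne_iff.mp hf0
  have h : 2 * f x * (1 - f 1) = 0 := by
    have := hf x 1
    rw [mul_one, inv_one, mul_one, hμ1] at this
    linear_combination this
  have h2fx : 2 * f x ≠ 0 := mul_ne_zero two_ne_zero hx
  exact (sub_eq_zero.mp ((mul_eq_zero.mp h).resolve_left h2fx)).symm

theorem dAlembert_mul_map_inv (hf : ∀ x y, f (x * y) + μ y * f (x * y⁻¹) = 2 * f x * f y)
    (hf1 : f 1 = 1) (y : G) : μ y * f y⁻¹ = f y := by
  have := hf 1 y
  rw [one_mul, one_mul, hf1] at this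
  linear_combination this

theorem mul_map_mul_inv_comm (hμ : ∀ x y, μ (x * y) = μ x * μ y)
    (hinv : ∀ y, μ y * f y⁻¹ = f y) (x y : G) :
    μ x * f (y * x⁻¹) = μ y * f (x * y⁻¹) := by
  calc μ x * f (y * x⁻¹) = μ x * (μ (y * x⁻¹) * f (y * x⁻¹)⁻¹) := by rw [hinv]
    _ = μ (y * x⁻¹ * x) * f (x * y⁻¹) := by
      rw [hμ (y * x⁻¹) x, mul_inv_rev, inv_inv]; ring
    _ = μ y * f (x * y⁻¹) := by rw [inv_mul_cancel_right]

end DAlembert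

theorem stmt_8 {G : Type*} [Group G] (μ f : G → ℂ)
    (hμ : ∀ x y, μ (x * y) = μ x * μ y) (hμ0 : ∀ x, μ x ≠ 0)
    (hf : ∀ x y, f (x * y) + μ y * f (x * y⁻¹) = 2 * f x * f y)
    (hf0 : f ≠ 0) : ∀ x y, f (x * y) = f (y * x) := by
  intro x y
  have hf1 := dAlembert_map_one (map_one_eq_one_of_map_mul hμ (hμ0 1)) hf hf0
  have hswap := mul_map_mul_inv_comm hμ (dAlembert_mul_map_inv hf hf1) x y
  linear_combination hf x y - hf y x + hswap
end

section
/- Let G be a group, μ a character of G into ℂ\{0}, and f a nonzero solution of the μ-d'Alembert equation f(xy) + μ(y) f(xy⁻¹) = 2 f(x) f(y). Define f_x(y) = f(xy) - f(x)f(y). Then for every x ∈ G, the pair (f_x, f) satisfies the symmetrized sine addition law f_x(yz) + f_x(zy) = 2 f_x(y) f(z) + 2 f_x(z) f(y) for all y, z ∈ G. -/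
theorem stmt_9 {G : Type*} [Group G] (μ f : G → ℂ)
    (hμ : ∀ x y, μ (x * y) = μ x * μ y) (hμ0 : ∀ x, μ x ≠ 0)
    (hf : ∀ x y, f (x * y) + μ y * f (x * y⁻¹) = 2 * f x * f y)
    (hf0 : f ≠ 0) :
    ∀ x y z, (f (x * (y * z)) - f x * f (y * z)) + (f (x * (z * y)) - f x * f (z * y))
      = 2 * (f (x * y) - f x * f y) * f z + 2 * (f (x * z) - f x * f z) * f y := by
  have hμ1 : μ 1 = 1 := by
    have := hμ 1 1
    simp only [mul_one] at this
    have h0 := hμ0 1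
    field_simp at this
    tauto
  have hf1 : f 1 = 1 := by
    have h11 := hf 1 1
    simp only [one_mul, inv_one, hμ1] at h11
    -- f 1 + f 1 = 2 * f 1 * f 1
    have hcase : f 1 = 0 ∨ f 1 = 1 := by
      have : f 1 * (f 1 - 1) = 0 := by linear_combination -h11/2
      rcases mul_eq_zero.mp this with h | h
      · exact Or.inl h
      · exact Or.inr (by linear_combination h)
    rcases hcase with h0 | h1
    · exfalso
      -- f(y⁻¹) = - f(y)/μ(y), leads to f ≡ 0
      have hodd : ∀ y, μ y * f y⁻¹ = - f y := by
        intro y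
        have := hf 1 y
        simp only [one_mul, h0] at this
        linear_combination this
      have hzero : ∀ x y, f x * f y = 0 := by
        intro x y
        have h1 := hf x y⁻¹
        have h2 := hf x y
        have hμy : μ y * μ y⁻¹ = 1 := by
          rw [← hμ]; simp [hμ1]
        have hoy := hodd y
        simp only [inv_inv] at h1
        -- multiply h1 by μ y
        have h3 : μ y * f (x * y⁻¹) + f (x * y) = 2 * f x * (μ y * f y⁻¹) := by
          have := congrArg (fun t => μ y * t) h1
          simp only [mul_add, ← mul_assoc] at this
          calc μ y * f (x * y⁻¹) + f (x * y)
              = μ y * f (x * y⁻¹) + (μ y * μ y⁻¹) * f (x * y) := by rw [hμy]; ring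
            _ = 2 * f x * (μ y * f y⁻¹) := by linear_combination this
        rw [hoy] at h3
        linear_combination (h3 - h2) / 4
      apply hf0
      funext x
      have := hzero x x
      have : f x = 0 := by
        rcases mul_eq_zero.mp this with h | h <;> exact h
      simpa using this
    · exact h1
  have hinv : ∀ u, μ u * f u⁻¹ = f u := by
    intro u
    have := hf 1 u
    simp only [one_mul, hf1] at this
    linear_combination this
  have key : ∀ x u, μ u * (f (x * u⁻¹) - f x * f u⁻¹) = -(f (x * u) - f x * f u) := by
    intro x u
    linear_combination hf x u - f x * hinv u
  intro x y z
  have A := hf (x * y) z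
  have B := hf (x * z) y
  have C := hf y z
  have D := hf z y
  have E := key x (y * z⁻¹)
  have hμyz : μ (y * z⁻¹) * μ z = μ y := by
    rw [← hμ]; simp
  -- E' : μ y * (f (x*z*y⁻¹) - f x * f (z*y⁻¹)) = - μ z * (f (x*y*z⁻¹) - f x * f (y*z⁻¹))
  have E' : μ y * (f (x * z * y⁻¹) - f x * f (z * y⁻¹))
      = - (μ z * (f (x * y * z⁻¹) - f x * f (y * z⁻¹))) := by
    have := congrArg (fun t => μ z * t) E
    simp only [mul_inv_rev, inv_inv, ← mul_assoc] at this ⊢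
    calc μ y * (f (x * z * y⁻¹) - f x * f (z * y⁻¹))
        = μ (y * z⁻¹) * μ z * (f (x * z * y⁻¹) - f x * f (z * y⁻¹)) := by rw [hμyz]
      _ = _ := by linear_combination this
  simp only [← mul_assoc] at A B C D E' ⊢
  linear_combination A + B - f x * C - f x * D - E'
end

section
/- Let G be an abelian group and let f, g : G → ℂ satisfy the sine addition law f(xy) = f(x) g(y) + g(x) f(y) for all x, y ∈ G, with f not identically zero. Then either (a) there exist a multiplicative function φ : G → ℂ and a nonzero constant c with g = φ/2 and f = cφ, or (b) there exist distinct multiplicative functions φ, ψ : G → ℂ and a nonzero constant c with g = (φ+ψ)/2 and f = c(φ-ψ), or (c) g is multiplicative (g(xy) = g(x)g(y)) and f satisfies f(xy) = f(x) g(y) + g(x) f(y) with g multiplicative. -/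
/-! Expanding `f ((x * y) * z) = f (x * (y * z))` with the sine addition law shows that
`f x * (g (y * z) - g y * g z)` is symmetric in `x` and `z`. Fixing `z = x₀` with `f x₀ ≠ 0`
gives the cosine-type law `g (x * y) = g x * g y + α * f x * f y` for a constant `α`.
If `α = 0`, `g` is multiplicative; otherwise, with `b ^ 2 = α`, both `g + b * f` and
`g - b * f` are multiplicative, and `g`, `f` are their half-sum and scaled difference. -/

section SineAddition

variable {G K : Type*} [Semigroup G] {f g : G → K}

theorem sine_addition_defect_symm [CommRing K]
    (hfg : ∀ x y, f (x * y) = f x * g y + g x * f y) (x y z : G) :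
    f x * (g (y * z) - g y * g z) = f z * (g (x * y) - g x * g y) := by
  have h := hfg (x * y) z
  rw [mul_assoc, hfg x (y * z), hfg x y, hfg y z] at h
  linear_combination h

theorem exists_cosine_addition_of_sine_addition [Field K]
    (hfg : ∀ x y, f (x * y) = f x * g y + g x * f y) {x₀ : G} (hx₀ : f x₀ ≠ 0) :
    ∃ α : K, ∀ x y, g (x * y) = g x * g y + α * (f x * f y) := by
  refine ⟨(g (x₀ * x₀) - g x₀ * g x₀) / (f x₀ * f x₀), fun x y => ?_⟩
  field_simp
  linear_combination -f x₀ * sine_addition_defect_symm hfg x y x₀ -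
    f x * sine_addition_defect_symm hfg y x₀ x₀

theorem map_mul_add_mul_of_sine_addition [CommRing K]
    (hfg : ∀ x y, f (x * y) = f x * g y + g x * f y) {b : K}
    (hg : ∀ x y, g (x * y) = g x * g y + b ^ 2 * (f x * f y)) (x y : G) :
    g (x * y) + b * f (x * y) = (g x + b * f x) * (g y + b * f y) := by
  linear_combination hg x y + b * hfg x y

end SineAddition

theorem stmt_10 {G : Type*} [CommGroup G] (f g : G → ℂ)
    (hfg : ∀ x y, f (x * y) = f x * g y + g x * f y)
    (hf0 : f ≠ 0) :
    (∃ (φ : G → ℂ) (c : ℂ), c ≠ 0 ∧ (∀ x y, φ (x * y) = φ x * φ y) ∧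
        (∀ x, g x = φ x / 2) ∧ (∀ x, f x = c * φ x)) ∨
    (∃ (φ ψ : G → ℂ) (c : ℂ), c ≠ 0 ∧ φ ≠ ψ ∧
        (∀ x y, φ (x * y) = φ x * φ y) ∧ (∀ x y, ψ (x * y) = ψ x * ψ y) ∧
        (∀ x, g x = (φ x + ψ x) / 2) ∧ (∀ x, f x = c * (φ x - ψ x))) ∨
    (∀ x y, g (x * y) = g x * g y) := by
  obtain ⟨x₀, hx₀⟩ := Function.ne_iff.mp hf0
  obtain ⟨α, hα⟩ := exists_cosine_addition_of_sine_addition hfg hx₀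
  by_cases hα0 : α = 0
  · simp only [hα0, zero_mul, add_zero] at hα
    exact Or.inr (Or.inr hα)
  obtain ⟨b, rfl⟩ := IsAlgClosed.exists_pow_nat_eq α two_pos
  have hb0 : b ≠ 0 := by rintro rfl; simp at hα0
  have hneg : ∀ x y, g (x * y) = g x * g y + (-b) ^ 2 * (f x * f y) := by simpa using hα
  refine Or.inr (Or.inl ⟨fun x => g x + b * f x, fun x => g x + -b * f x, (2 * b)⁻¹,
    by simpa using hb0, fun h => hx₀ ?_, map_mul_add_mul_of_sine_addition hfg hα,
    map_mul_add_mul_of_sine_addition hfg hneg, fun x => by ring, fun x => by field_simp; ring⟩)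
  have h := congrFun h x₀
  simpa [hb0] using (by linear_combination h : 2 * b * f x₀ = 0)
end

section
/- Let G be an abelian group, μ a character of G into ℂ\{0}, and (f, g) a solution of the μ-Wilson equation f(xy) + μ(y) f(xy⁻¹) = 2 f(x) g(y) with f ≠ 0. Then there exists a multiplicative function φ : G → ℂ such that g(x) = (φ(x) + μ(x) φ(x⁻¹))/2 for all x ∈ G. -/
/-!
Pick `a` with `f a ≠ 0`. Evaluating the Wilson equation at `a`, `a * y` and `a * y⁻¹` shows
`g 1 = 1` and that `g` solves the μ-d'Alembert equation
`g (x * y) + μ y * g (x * y⁻¹) = 2 * g x * g y`. For such `g`,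
`(g (x * y) - g x * g y) ^ 2 = (g x ^ 2 - μ x) * (g y ^ 2 - μ y)`. If `g ^ 2 = μ` everywhere, `g` is
multiplicative and `φ = g` works. Otherwise choose `b` and `c ≠ 0` with `c ^ 2 = g b ^ 2 - μ b`;
then `ψ x = g (x * b) - g x * g b` obeys the sine addition law
`ψ (x * y) = ψ x * g y + g x * ψ y`, as well as `ψ x * ψ y = c ^ 2 * (g (x * y) - g x * g y)` and
`μ x * ψ x⁻¹ = -ψ x`, so `φ = g + ψ / c` is multiplicative and `(φ x + μ x * φ x⁻¹) / 2 = g x`.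
-/

theorem add_div_mul_of_sine_addition {M : Type*} [Mul M] {g ψ : M → ℂ} {c : ℂ} (hc : c ≠ 0)
    (hadd : ∀ x y, ψ (x * y) = ψ x * g y + g x * ψ y)
    (hmul : ∀ x y, ψ x * ψ y = c ^ 2 * (g (x * y) - g x * g y)) (x y : M) :
    g (x * y) + ψ (x * y) / c = (g x + ψ x / c) * (g y + ψ y / c) := by
  field_simp
  linear_combination c * hadd x y - hmul x y

section DAlembert

variable {G : Type*} [CommGroup G]

def IsDAlembertSolution (μ : G →* ℂ) (g : G → ℂ) : Prop :=
  ∀ x y, g (x * y) + μ y * g (x * y⁻¹) = 2 * g x * g y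

def sineCompanion (g : G → ℂ) (b x : G) : ℂ := g (x * b) - g x * g b

namespace IsDAlembertSolution

variable {μ : G →* ℂ} {f g : G → ℂ}

theorem of_wilson (hfg : ∀ x y, f (x * y) + μ y * f (x * y⁻¹) = 2 * f x * g y) (hf : f ≠ 0) :
    IsDAlembertSolution μ g := by
  obtain ⟨a, ha⟩ := Function.ne_iff.mp hf
  intro y z
  refine mul_left_cancel₀ (mul_ne_zero two_ne_zero ha) ?_
  have e1 := hfg a (y * z)
  have e2 := hfg a (y * z⁻¹)
  have e3 := hfg (a * y) z
  have e4 := hfg (a * y⁻¹) z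
  have e5 := hfg a y
  simp only [map_mul, mul_inv_rev, inv_inv, mul_assoc, mul_comm, mul_left_comm]
    at e1 e2 e3 e4 e5 ⊢
  linear_combination -e1 - μ z * e2 + e3 + μ y * e4 + 2 * g z * e5 +
    μ y * f (a * (z * y⁻¹)) * map_mul_eq_one μ (mul_inv_cancel z)

theorem apply_one_of_wilson (hfg : ∀ x y, f (x * y) + μ y * f (x * y⁻¹) = 2 * f x * g y)
    (hf : f ≠ 0) : g 1 = 1 := by
  obtain ⟨a, ha⟩ := Function.ne_iff.mp hf
  have h := hfg a 1
  simp only [mul_one, inv_one, map_one, one_mul] at h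
  exact mul_left_cancel₀ ha (by linear_combination (-1 / 2 : ℂ) * h)

theorem apply_inv (h : IsDAlembertSolution μ g) (h1 : g 1 = 1) (x : G) :
    μ x * g x⁻¹ = g x := by
  have h := h 1 x
  simp only [one_mul, h1] at h
  linear_combination h

theorem mul_apply_mul_inv (h : IsDAlembertSolution μ g) (h1 : g 1 = 1) (x y : G) :
    μ y * g (x * y⁻¹) = μ x * g (x⁻¹ * y) := by
  have h := h.apply_inv h1 (x * y⁻¹)
  rw [mul_inv_rev, inv_inv, mul_comm y, map_mul] at h
  linear_combination -μ y * h + μ x * g (x⁻¹ * y) * map_mul_eq_one μ (mul_inv_cancel y)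

theorem sq_sub_mul_eq (h : IsDAlembertSolution μ g) (h1 : g 1 = 1) (x y : G) :
    (g (x * y) - g x * g y) ^ 2 = (g x ^ 2 - μ x) * (g y ^ 2 - μ y) := by
  have apply_mul_self : ∀ z, g (z * z) = 2 * g z ^ 2 - μ z := fun z => by
    linear_combination (by simpa [h1] using h z z : g (z * z) + μ z = 2 * g z * g z)
  have hxy := h x y
  have hsq := h (x * y) (x * y⁻¹)
  rw [show x * y * (x * y⁻¹) = x * x by simp [mul_assoc, mul_left_comm],
    show x * y * (x * y⁻¹)⁻¹ = y * y by simp [mul_assoc, mul_left_comm], map_mul,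
    apply_mul_self, apply_mul_self] at hsq
  linear_combination g (x * y) * hxy + (μ y / 2) * hsq
    - (μ x * g y ^ 2 - μ y * μ x / 2) * map_mul_eq_one μ (mul_inv_cancel y)

theorem mul_of_forall_sq_eq (h : IsDAlembertSolution μ g) (h1 : g 1 = 1)
    (hsq : ∀ x, g x ^ 2 = μ x) (x y : G) : g (x * y) = g x * g y := by
  have := h.sq_sub_mul_eq h1 x y
  rwa [hsq, hsq, sub_self, zero_mul, sq_eq_zero_iff, sub_eq_zero] at this

theorem sineCompanion_mul (h : IsDAlembertSolution μ g) (h1 : g 1 = 1) (b x y : G) :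
    sineCompanion g b (x * y) = sineCompanion g b x * g y + g x * sineCompanion g b y := by
  unfold sineCompanion
  have C := h (x * b) y
  rw [mul_right_comm x b, mul_right_comm x b] at C
  have B := h (y * b) x
  rw [mul_comm (y * b) x, mul_comm (y * b) x⁻¹, ← mul_assoc] at B
  have D := h x y
  have E := h (x * y⁻¹) b
  have F := h.mul_apply_mul_inv h1 x (y * b)
  rw [show x * (y * b)⁻¹ = x * y⁻¹ * b⁻¹ by rw [mul_inv_rev, mul_comm b⁻¹, mul_assoc],
    map_mul] at F
  linear_combination (1 / 2 : ℂ) * C + (1 / 2 : ℂ) * B - g b * D - (μ y / 2) * E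
    + (1 / 2 : ℂ) * F

theorem sineCompanion_mul_sineCompanion (h : IsDAlembertSolution μ g) (h1 : g 1 = 1)
    (b x y : G) :
    sineCompanion g b x * sineCompanion g b y = (g b ^ 2 - μ b) * (g (x * y) - g x * g y) := by
  have hxy := h.sineCompanion_mul h1 b x y
  unfold sineCompanion at hxy ⊢
  have P := h (x * b) (y * b)
  rw [mul_mul_mul_comm, ← mul_assoc, show x * b * (y * b)⁻¹ = x * y⁻¹ by group, map_mul] at P
  have R := h (x * y * b) b
  rw [mul_inv_cancel_right] at R
  have D := h x y
  linear_combination (-1 / 2 : ℂ) * P + g b * hxy + (1 / 2 : ℂ) * R + (μ b / 2) * D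

theorem mul_sineCompanion_inv (h : IsDAlembertSolution μ g) (h1 : g 1 = 1) (b x : G) :
    μ x * sineCompanion g b x⁻¹ = -sineCompanion g b x := by
  unfold sineCompanion
  linear_combination h x b - h.mul_apply_mul_inv h1 x b - g b * h.apply_inv h1 x

theorem exists_sine_addition (h : IsDAlembertSolution μ g) (h1 : g 1 = 1) :
    ∃ (ψ : G → ℂ) (c : ℂ), c ≠ 0 ∧ (∀ x y, ψ (x * y) = ψ x * g y + g x * ψ y) ∧
      (∀ x y, ψ x * ψ y = c ^ 2 * (g (x * y) - g x * g y)) ∧ ∀ x, μ x * ψ x⁻¹ = -ψ x := by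
  by_cases hsq : ∀ x, g x ^ 2 = μ x
  · refine ⟨0, 1, one_ne_zero, fun _ _ => by simp, fun x y => ?_, fun _ => by simp⟩
    simp [h.mul_of_forall_sq_eq h1 hsq x y]
  obtain ⟨b, hb⟩ := not_forall.mp hsq
  obtain ⟨c, hc⟩ := IsAlgClosed.exists_pow_nat_eq (g b ^ 2 - μ b) two_pos
  refine ⟨sineCompanion g b, c, ?_, h.sineCompanion_mul h1 b, fun x y => ?_,
    h.mul_sineCompanion_inv h1 b⟩
  · rintro rfl
    exact hb (by linear_combination -hc)
  · rw [hc, h.sineCompanion_mul_sineCompanion h1]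

theorem exists_eq_add_mul_inv (h : IsDAlembertSolution μ g) (h1 : g 1 = 1) :
    ∃ φ : G → ℂ, (∀ x y, φ (x * y) = φ x * φ y) ∧ ∀ x, g x = (φ x + μ x * φ x⁻¹) / 2 := by
  obtain ⟨ψ, c, hc, hadd, hmul, hodd⟩ := h.exists_sine_addition h1
  refine ⟨fun x => g x + ψ x / c, add_div_mul_of_sine_addition hc hadd hmul, fun x => ?_⟩
  field_simp
  linear_combination -c * h.apply_inv h1 x - hodd x

end IsDAlembertSolution

end DAlembert

theorem stmt_11 {G : Type*} [CommGroup G] (μ f g : G → ℂ)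
    (hμ : ∀ x y, μ (x * y) = μ x * μ y) (hμ0 : ∀ x, μ x ≠ 0)
    (hfg : ∀ x y, f (x * y) + μ y * f (x * y⁻¹) = 2 * f x * g y)
    (hf0 : f ≠ 0) :
    ∃ φ : G → ℂ, (∀ x y, φ (x * y) = φ x * φ y) ∧
      ∀ x, g x = (φ x + μ x * φ x⁻¹) / 2 := by
  let χ : G →* ℂ :=
    { toFun := μ
      map_one' := mul_left_cancel₀ (hμ0 1) (by rw [← hμ, mul_one, mul_one])
      map_mul' := hμ }
  exact (IsDAlembertSolution.of_wilson (μ := χ) hfg hf0).exists_eq_add_mul_inv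
    (IsDAlembertSolution.apply_one_of_wilson (μ := χ) hfg hf0)
end

section
/- Let G be a group, μ a character of G into ℂ\{0} with |μ(x)| = 1 for all x, δ > 0, and f, g : G → ℂ such that |f(xy) + μ(y) f(xy⁻¹) - 2 f(x) g(y)| ≤ δ for all x, y ∈ G. If f is unbounded, then g(y) = μ(y) g(y⁻¹) for all y ∈ G. -/
/-!
Put `c = g y - μ y * g y⁻¹`. Comparing the functional inequality at `(x, y)` with `μ y` times the one
at `(x, y⁻¹)`, the terms `f (x * y)` and `f (x * y⁻¹)` cancel because `μ y * μ y⁻¹ = 1`, leaving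
`‖2 * f x * c‖ ≤ 2 * δ` for every `x`. So `c ≠ 0` would bound `f` by `δ / ‖c‖`.
-/

theorem map_mul_map_inv_eq_one {G M₀ : Type*} [Group G] [MonoidWithZero M₀] [IsCancelMulZero M₀] {μ : G → M₀}
    (hμ : ∀ x y, μ (x * y) = μ x * μ y) (hμ1 : μ 1 ≠ 0) (y : G) : μ y * μ y⁻¹ = 1 := by
  have hone : μ 1 = 1 := (mul_eq_left₀ hμ1).mp (by rw [← hμ, mul_one])
  rw [← hμ, mul_inv_cancel, hone]

theorem norm_two_mul_mul_sub_le {G 𝕜 : Type*} [Group G] [NormedField 𝕜] {μ f g : G → 𝕜} {δ : ℝ}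
    (hμ : ∀ x y, μ (x * y) = μ x * μ y) (hμ1 : ∀ x, ‖μ x‖ = 1)
    (hfg : ∀ x y, ‖f (x * y) + μ y * f (x * y⁻¹) - 2 * f x * g y‖ ≤ δ) (x y : G) :
    ‖2 * f x * (g y - μ y * g y⁻¹)‖ ≤ 2 * δ := by
  have hinv : μ y * μ y⁻¹ = 1 :=
    map_mul_map_inv_eq_one hμ (norm_ne_zero_iff.mp (by simp [hμ1])) y
  have hfg' := hfg x y⁻¹
  rw [inv_inv] at hfg'
  calc ‖2 * f x * (g y - μ y * g y⁻¹)‖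
      = ‖μ y * (f (x * y⁻¹) + μ y⁻¹ * f (x * y) - 2 * f x * g y⁻¹)
          - (f (x * y) + μ y * f (x * y⁻¹) - 2 * f x * g y)‖ := by
        congr 1
        linear_combination (-f (x * y)) * hinv
    _ ≤ ‖μ y‖ * δ + δ := by
        refine (norm_sub_le _ _).trans (add_le_add ?_ (hfg x y))
        rw [norm_mul]
        exact mul_le_mul_of_nonneg_left hfg' (norm_nonneg _)
    _ = 2 * δ := by rw [hμ1]; ring

theorem stmt_12_general {G : Type*} [Group G] (μ f g : G → ℂ) (δ : ℝ)
    (hμ : ∀ x y, μ (x * y) = μ x * μ y) (hμ1 : ∀ x, ‖μ x‖ = 1)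
    (hfg : ∀ x y, ‖f (x * y) + μ y * f (x * y⁻¹) - 2 * f x * g y‖ ≤ δ)
    (hf : ¬ ∃ C : ℝ, ∀ x, ‖f x‖ ≤ C) :
    ∀ y, g y = μ y * g y⁻¹ := by
  intro y
  by_contra hne
  have hc : 0 < ‖g y - μ y * g y⁻¹‖ := norm_pos_iff.mpr (sub_ne_zero.mpr hne)
  refine hf ⟨δ / ‖g y - μ y * g y⁻¹‖, fun x => ?_⟩
  have key := norm_two_mul_mul_sub_le hμ hμ1 hfg x y
  rw [norm_mul, norm_mul, Complex.norm_two] at key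
  rw [le_div_iff₀ hc]
  linarith

theorem stmt_12 {G : Type*} [Group G] (μ f g : G → ℂ) (δ : ℝ) (hδ : 0 < δ)
    (hμ : ∀ x y, μ (x * y) = μ x * μ y) (hμ1 : ∀ x, ‖μ x‖ = 1)
    (hfg : ∀ x y, ‖f (x * y) + μ y * f (x * y⁻¹) - 2 * f x * g y‖ ≤ δ)
    (hf : ¬ ∃ C : ℝ, ∀ x, ‖f x‖ ≤ C) :
    ∀ y, g y = μ y * g y⁻¹ :=
  stmt_12_general μ f g δ hμ hμ1 hfg hf
end

section
/- Let G be a group, μ a unitary character of G (|μ| ≡ 1), δ > 0, and f : G → ℂ satisfying |f(xy) + μ(y) f(xy⁻¹) - 2 f(x) f(y)| ≤ δ for all x, y ∈ G. Then either f is bounded, or f satisfies the μ-d'Alembert equation f(xy) + μ(y) f(xy⁻¹) = 2 f(x) f(y) exactly for all x, y ∈ G. -/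
/-!
Superstability: if `f` is unbounded, then a constant `c` with `f z * c` bounded uniformly in `z`
must vanish. Applied to `c = 2 (μ y f y⁻¹ - f y)`, which is a combination of two defects, this
shows that `f` is `μ`-even, `f y = μ y f y⁻¹`; evenness turns the right-hand functional
inequality into a left-hand one. Then `f z` times the defect at `(x, y)` is a combination of five
defects with coefficients of norm `1` or `‖2 f y‖`, so it is bounded in `z` and the defect vanishes.
-/

lemma eq_zero_of_forall_norm_mul_le {α 𝕜 : Type*} [NormedDivisionRing 𝕜] {f : α → 𝕜}
    (hf : ¬ ∃ C : ℝ, ∀ x, ‖f x‖ ≤ C) {c : 𝕜} {K : ℝ} (h : ∀ x, ‖f x * c‖ ≤ K) : c = 0 := by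
  by_contra hc
  refine hf ⟨K / ‖c‖, fun x => ?_⟩
  rw [le_div_iff₀ (norm_pos_iff.2 hc), ← norm_mul]
  exact h x

section Algebra

variable {G R : Type*} [Group G] [CommRing R] {μ f : G → R}

def dAlembertDefect (μ f : G → R) (x y : G) : R :=
  f (x * y) + μ y * f (x * y⁻¹) - 2 * f x * f y

def dAlembertDefectLeft (μ f : G → R) (x y : G) : R :=
  f (x * y) + μ x * f (x⁻¹ * y) - 2 * f x * f y

lemma dAlembertDefectLeft_eq_of_even (hμ : ∀ x y, μ (x * y) = μ x * μ y)
    (heven : ∀ y, f y = μ y * f y⁻¹) (x y : G) :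
    dAlembertDefectLeft μ f x y = μ x * μ y * dAlembertDefect μ f y⁻¹ x⁻¹ := by
  have hxy : f (x * y) = μ x * μ y * f (y⁻¹ * x⁻¹) := by
    rw [heven, hμ, mul_inv_rev]
  have hx'y : f (x⁻¹ * y) = μ x⁻¹ * μ y * f (y⁻¹ * x) := by
    rw [heven, hμ, mul_inv_rev, inv_inv]
  simp only [dAlembertDefectLeft, dAlembertDefect, inv_inv]
  linear_combination hxy + μ x * hx'y - 2 * f y * heven x - 2 * μ x * f x⁻¹ * heven y

lemma mul_dAlembertDefect_eq (x y z : G) :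
    f z * (2 * dAlembertDefect μ f x y) =
      -dAlembertDefectLeft μ f z (x * y) - μ y * dAlembertDefectLeft μ f z (x * y⁻¹)
        + 2 * f y * dAlembertDefectLeft μ f z x + dAlembertDefect μ f (z * x) y
        + μ z * dAlembertDefect μ f (z⁻¹ * x) y := by
  simp only [dAlembertDefect, dAlembertDefectLeft, mul_assoc]
  ring

end Algebra

section Analysis

variable {G 𝕜 : Type*} [Group G] [NormedField 𝕜] {μ f : G → 𝕜} {δ : ℝ}

lemma mul_map_inv_eq_one (hμ : ∀ x y, μ (x * y) = μ x * μ y) (hμ1 : ∀ x, ‖μ x‖ = 1) (x : G) :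
    μ x * μ x⁻¹ = 1 := by
  have hμ0 : μ 1 ≠ 0 := norm_ne_zero_iff.1 (by rw [hμ1]; exact one_ne_zero)
  have hμone : μ 1 = 1 := mul_left_cancel₀ hμ0 (by rw [← hμ, mul_one, mul_one])
  rw [← hμ, mul_inv_cancel, hμone]

lemma map_eq_mul_map_inv_of_not_bounded [CharZero 𝕜] (hμ : ∀ x y, μ (x * y) = μ x * μ y)
    (hμ1 : ∀ x, ‖μ x‖ = 1) (hf : ∀ x y, ‖dAlembertDefect μ f x y‖ ≤ δ)
    (hunb : ¬ ∃ C : ℝ, ∀ x, ‖f x‖ ≤ C) (y : G) : f y = μ y * f y⁻¹ := by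
  have hzero : 2 * (μ y * f y⁻¹ - f y) = 0 := by
    refine eq_zero_of_forall_norm_mul_le hunb (K := 2 * δ) fun z => ?_
    have hcomb : f z * (2 * (μ y * f y⁻¹ - f y)) =
        dAlembertDefect μ f z y - μ y * dAlembertDefect μ f z y⁻¹ := by
      simp only [dAlembertDefect, inv_inv]
      linear_combination f (z * y) * mul_map_inv_eq_one hμ hμ1 y
    calc ‖f z * (2 * (μ y * f y⁻¹ - f y))‖
        ≤ ‖dAlembertDefect μ f z y‖ + ‖μ y‖ * ‖dAlembertDefect μ f z y⁻¹‖ := by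
          rw [hcomb, ← norm_mul]; exact norm_sub_le _ _
      _ ≤ 2 * δ := by rw [hμ1, one_mul]; linarith [hf z y, hf z y⁻¹]
  exact (sub_eq_zero.1 ((mul_eq_zero.1 hzero).resolve_left two_ne_zero)).symm

lemma norm_dAlembertDefectLeft_le (hμ : ∀ x y, μ (x * y) = μ x * μ y) (hμ1 : ∀ x, ‖μ x‖ = 1)
    (hf : ∀ x y, ‖dAlembertDefect μ f x y‖ ≤ δ) (heven : ∀ y, f y = μ y * f y⁻¹) (x y : G) :
    ‖dAlembertDefectLeft μ f x y‖ ≤ δ := by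
  rw [dAlembertDefectLeft_eq_of_even hμ heven, norm_mul, norm_mul, hμ1, hμ1, one_mul, one_mul]
  exact hf _ _

lemma dAlembertDefect_eq_zero_of_not_bounded [CharZero 𝕜] (hμ : ∀ x y, μ (x * y) = μ x * μ y)
    (hμ1 : ∀ x, ‖μ x‖ = 1) (hf : ∀ x y, ‖dAlembertDefect μ f x y‖ ≤ δ)
    (hunb : ¬ ∃ C : ℝ, ∀ x, ‖f x‖ ≤ C) (x y : G) : dAlembertDefect μ f x y = 0 := by
  have heven := map_eq_mul_map_inv_of_not_bounded hμ hμ1 hf hunb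
  have hL := norm_dAlembertDefectLeft_le hμ hμ1 hf heven
  have hzero : 2 * dAlembertDefect μ f x y = 0 := by
    refine eq_zero_of_forall_norm_mul_le hunb (K := (4 + ‖(2 : 𝕜) * f y‖) * δ) fun z => ?_
    rw [mul_dAlembertDefect_eq]
    have hC : ‖(2 : 𝕜) * f y‖ * ‖dAlembertDefectLeft μ f z x‖ ≤ ‖(2 : 𝕜) * f y‖ * δ :=
      mul_le_mul_of_nonneg_left (hL z x) (norm_nonneg _)
    calc _ ≤ ‖dAlembertDefectLeft μ f z (x * y)‖ + ‖μ y‖ * ‖dAlembertDefectLeft μ f z (x * y⁻¹)‖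
          + ‖(2 : 𝕜) * f y‖ * ‖dAlembertDefectLeft μ f z x‖ + ‖dAlembertDefect μ f (z * x) y‖
          + ‖μ z‖ * ‖dAlembertDefect μ f (z⁻¹ * x) y‖ := by
          simp only [← norm_mul, ← norm_neg (dAlembertDefectLeft μ f z (x * y))]
          refine norm_add₄_le.trans ?_
          gcongr
          exact norm_sub_le _ _
      _ ≤ (4 + ‖(2 : 𝕜) * f y‖) * δ := by
          rw [hμ1, hμ1, one_mul, one_mul]
          linarith [hL z (x * y), hL z (x * y⁻¹), hf (z * x) y, hf (z⁻¹ * x) y]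
  exact (mul_eq_zero.1 hzero).resolve_left two_ne_zero

end Analysis

theorem stmt_13_general {G : Type*} [Group G] (μ f : G → ℂ) (δ : ℝ)
    (hμ : ∀ x y, μ (x * y) = μ x * μ y) (hμ1 : ∀ x, ‖μ x‖ = 1)
    (hf : ∀ x y, ‖f (x * y) + μ y * f (x * y⁻¹) - 2 * f x * f y‖ ≤ δ) :
    (∃ C : ℝ, ∀ x, ‖f x‖ ≤ C) ∨
    (∀ x y, f (x * y) + μ y * f (x * y⁻¹) = 2 * f x * f y) := by
  refine or_iff_not_imp_left.2 fun hunb x y => ?_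
  exact sub_eq_zero.1 (dAlembertDefect_eq_zero_of_not_bounded hμ hμ1 hf hunb x y)

theorem stmt_13 {G : Type*} [Group G] (μ f : G → ℂ) (δ : ℝ) (hδ : 0 < δ)
    (hμ : ∀ x y, μ (x * y) = μ x * μ y) (hμ1 : ∀ x, ‖μ x‖ = 1)
    (hf : ∀ x y, ‖f (x * y) + μ y * f (x * y⁻¹) - 2 * f x * f y‖ ≤ δ) :
    (∃ C : ℝ, ∀ x, ‖f x‖ ≤ C) ∨
    (∀ x y, f (x * y) + μ y * f (x * y⁻¹) = 2 * f x * f y) :=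
  stmt_13_general μ f δ hμ hμ1 hf
end

section
/- Let G be a group, μ a unitary character of G, δ > 0, and f, g : G → ℂ with |f(xy) + μ(y) f(xy⁻¹) - 2 f(x) g(y)| ≤ δ for all x, y ∈ G. If f is unbounded, then g satisfies the long d'Alembert equation g(xy) + μ(y) g(xy⁻¹) + g(yx) + μ(y) g(y⁻¹x) = 4 g(x) g(y) for all x, y ∈ G. -/
/-!
Write `W(x, y)` for the defect of `f(xy) + μ(y) f(xy⁻¹) = 2 f(x) g(y)` and `D(x, y)` for that of
the long d'Alembert equation. Expanding ten translates of `W` gives, for every `z`,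
`2 f(z) D(x, y) = Σᵢ cᵢ W(z aᵢ, bᵢ)` with coefficients `cᵢ` independent of `z`. As `W` is bounded,
so is `z ↦ f(z) D(x, y)`, and since `f` is unbounded, `D(x, y) = 0`.
-/

open Asymptotics

section

variable {G : Type*} [Group G]

def wilsonDefect (μ f g : G → ℂ) (x y : G) : ℂ :=
  f (x * y) + μ y * f (x * y⁻¹) - 2 * f x * g y

def longDAlembertDefect (μ g : G → ℂ) (x y : G) : ℂ :=
  g (x * y) + μ y * g (x * y⁻¹) + g (y * x) + μ y * g (y⁻¹ * x) - 4 * g x * g y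

theorem two_mul_mul_longDAlembertDefect (μ : G →* ℂ) (f g : G → ℂ) (x y z : G) :
    2 * f z * longDAlembertDefect μ g x y =
      2 * g y * wilsonDefect μ f g z x + wilsonDefect μ f g (z * x) y
        + μ x * wilsonDefect μ f g (z * x⁻¹) y
        + 2 * g x * wilsonDefect μ f g z y + wilsonDefect μ f g (z * y) x
        + μ y * wilsonDefect μ f g (z * y⁻¹) x
        - wilsonDefect μ f g z (x * y) - μ y * wilsonDefect μ f g z (x * y⁻¹)
        - wilsonDefect μ f g z (y * x) - μ y * wilsonDefect μ f g z (y⁻¹ * x) := by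
  have hx : μ x ≠ 0 := ((Group.isUnit x).map μ).ne_zero
  have hy : μ y ≠ 0 := ((Group.isUnit y).map μ).ne_zero
  simp only [wilsonDefect, longDAlembertDefect, map_mul, map_inv, mul_inv_rev, inv_inv,
    mul_assoc]
  field_simp
  ring

theorem longDAlembertDefect_eq_zero (μ : G →* ℂ) {f g : G → ℂ} {δ : ℝ}
    (hfg : ∀ x y, ‖wilsonDefect μ f g x y‖ ≤ δ) (hf : ¬ ∃ C : ℝ, ∀ x, ‖f x‖ ≤ C) (x y : G) :
    longDAlembertDefect μ g x y = 0 := by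
  have hW : ∀ (φ : G → G) b, (fun z => wilsonDefect μ f g (φ z) b) =O[⊤] fun _ => (1 : ℂ) :=
    fun φ b => isBigO_top.mpr ⟨δ, fun z => by simpa using hfg (φ z) b⟩
  have hbdd : (fun z => 2 * f z * longDAlembertDefect μ g x y) =O[⊤] fun _ => (1 : ℂ) := by
    simp only [two_mul_mul_longDAlembertDefect]
    exact ((((((((((hW id x).const_mul_left _).add (hW (· * x) y)).add
      ((hW (· * x⁻¹) y).const_mul_left _)).add ((hW id y).const_mul_left _)).add
      (hW (· * y) x)).add ((hW (· * y⁻¹) x).const_mul_left _)).sub (hW id (x * y))).sub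
      ((hW id (x * y⁻¹)).const_mul_left _)).sub (hW id (y * x))).sub
      ((hW id (y⁻¹ * x)).const_mul_left _)
  by_contra hD
  refine hf ?_
  simp_rw [mul_comm _ (longDAlembertDefect μ g x y), ← mul_assoc,
    isBigO_const_mul_left_iff (mul_ne_zero hD two_ne_zero), isBigO_top] at hbdd
  simpa using hbdd

end

theorem stmt_14_general {G : Type*} [Group G] (μ f g : G → ℂ) (δ : ℝ)
    (hμ : ∀ x y, μ (x * y) = μ x * μ y) (hμ1 : ∀ x, ‖μ x‖ = 1)
    (hfg : ∀ x y, ‖f (x * y) + μ y * f (x * y⁻¹) - 2 * f x * g y‖ ≤ δ)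
    (hf : ¬ ∃ C : ℝ, ∀ x, ‖f x‖ ≤ C) :
    ∀ x y, g (x * y) + μ y * g (x * y⁻¹) + g (y * x) + μ y * g (y⁻¹ * x)
      = 4 * g x * g y := by
  have hμ_one : μ 1 = 1 := by
    have h := hμ 1 1
    rw [one_mul] at h
    exact (mul_eq_left₀ (norm_ne_zero_iff.mp ((hμ1 1).trans_ne one_ne_zero))).mp h.symm
  let χ : G →* ℂ := ⟨⟨μ, hμ_one⟩, hμ⟩
  intro x y
  exact sub_eq_zero.mp (longDAlembertDefect_eq_zero χ hfg hf x y)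

theorem stmt_14 {G : Type*} [Group G] (μ f g : G → ℂ) (δ : ℝ) (hδ : 0 < δ)
    (hμ : ∀ x y, μ (x * y) = μ x * μ y) (hμ1 : ∀ x, ‖μ x‖ = 1)
    (hfg : ∀ x y, ‖f (x * y) + μ y * f (x * y⁻¹) - 2 * f x * g y‖ ≤ δ)
    (hf : ¬ ∃ C : ℝ, ∀ x, ‖f x‖ ≤ C) :
    ∀ x y, g (x * y) + μ y * g (x * y⁻¹) + g (y * x) + μ y * g (y⁻¹ * x)
      = 4 * g x * g y :=
  stmt_14_general μ f g δ hμ hμ1 hfg hf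
end

section
/- Let G be an abelian group and μ a character of G into ℂ\{0}. Let φ, ψ : G → ℂ be multiplicative functions with φ ≠ ψ, and suppose f = (φ+ψ)/2 satisfies the μ-d'Alembert equation f(xy) + μ(y) f(xy⁻¹) = 2 f(x) f(y) for all x, y ∈ G. Then ψ(y) = μ(y) φ(y⁻¹) for all y ∈ G. -/
theorem stmt_19 {G : Type*} [CommGroup G] (μ φ ψ : G → ℂ)
    (hμ : ∀ x y, μ (x * y) = μ x * μ y) (hμ0 : ∀ x, μ x ≠ 0)
    (hφ : ∀ x y, φ (x * y) = φ x * φ y) (hψ : ∀ x y, ψ (x * y) = ψ x * ψ y)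
    (hφ0 : φ ≠ 0) (hψ0 : ψ ≠ 0) (hne : φ ≠ ψ)
    (hf : ∀ x y, (φ (x * y) + ψ (x * y)) / 2 + μ y * ((φ (x * y⁻¹) + ψ (x * y⁻¹)) / 2)
        = 2 * ((φ x + ψ x) / 2) * ((φ y + ψ y) / 2)) :
    ∀ y, ψ y = μ y * φ y⁻¹ := by
  have hφ1 : φ 1 = 1 := by
    obtain ⟨a, ha⟩ := Function.ne_iff.mp hφ0
    simp only [Pi.zero_apply] at ha
    have h := hφ a 1
    rw [mul_one] at h
    exact mul_left_cancel₀ ha (h.symm.trans (mul_one (φ a)).symm)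
  have hψ1 : ψ 1 = 1 := by
    obtain ⟨a, ha⟩ := Function.ne_iff.mp hψ0
    simp only [Pi.zero_apply] at ha
    have h := hψ a 1
    rw [mul_one] at h
    exact mul_left_cancel₀ ha (h.symm.trans (mul_one (ψ a)).symm)
  have key : ∀ x y, (μ y * φ y⁻¹ - ψ y) * φ x + (μ y * ψ y⁻¹ - φ y) * ψ x = 0 := by
    intro x y
    have h := hf x y
    rw [hφ, hψ, hφ, hψ] at h
    linear_combination 2 * h
  obtain ⟨a, ha⟩ := Function.ne_iff.mp hne
  intro y
  have h1 := key 1 y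
  rw [hφ1, hψ1, mul_one, mul_one] at h1
  have h2 := key a y
  have hB : (μ y * ψ y⁻¹ - φ y) = -(μ y * φ y⁻¹ - ψ y) := by linear_combination h1
  rw [hB] at h2
  have hA : (μ y * φ y⁻¹ - ψ y) * (φ a - ψ a) = 0 := by linear_combination h2
  have := (mul_eq_zero.mp hA).resolve_right (sub_ne_zero_of_ne ha)
  linear_combination -this
end
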